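/- Let S₀ = {ρ₁, …, ρ_l} and S₁ = {σ₁, …, σ_m} be two finite nonempty sets of density matrices on ℂ^n. Then the maximum over all POVM elements T of the minimum over pairs (ρ, σ) ∈ S₀ × S₁ of Tr(Tρ) − Tr(Tσ) equals the minimum over all probability distributions μ on S₀ × S₁ of (1/2)‖ρ_{μ₀} − σ_{μ₁}‖₁, where μ₀ and μ₁ denote the marginal distributions of μ on S₀ and S₁ respectively and ρ_{μ₀} = Σᵢ μ₀(i) ρᵢ, σ_{μ₁} = Σⱼ μ₁(j) σⱼ. -/

import Mathlib

open ComplexOrder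

/-- The trace norm of a complex matrix: `Tr √(Aᴴ A)`. -/
noncomputable def traceNorm {n : ℕ} (A : Matrix (Fin n) (Fin n) ℂ) : ℝ :=
  (((Matrix.posSemidef_conjTranspose_mul_self A).1.eigenvectorUnitary : Matrix (Fin n) (Fin n) ℂ) *
    Matrix.diagonal (((↑) : ℝ → ℂ) ∘ (Real.sqrt ·) ∘ (Matrix.posSemidef_conjTranspose_mul_self A).1.eigenvalues) *
    (star (Matrix.posSemidef_conjTranspose_mul_self A).1.eigenvectorUnitary : Matrix (Fin n) (Fin n) ℂ)).trace.re

/-- A POVM element: a matrix `T` with `0 ≤ T ≤ 1` in the Loewner order. -/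
def IsPOVMElement {n : ℕ} (T : Matrix (Fin n) (Fin n) ℂ) : Prop :=
  T.PosSemidef ∧ (1 - T).PosSemidef

/-- A density matrix: positive semidefinite with trace 1. -/
def IsDensityMatrix {n : ℕ} (ρ : Matrix (Fin n) (Fin n) ℂ) : Prop :=
  ρ.PosSemidef ∧ ρ.trace = 1

open Matrix

lemma trace_unitary_conj {n : ℕ} (U : Matrix.unitaryGroup (Fin n) ℂ)
    (X : Matrix (Fin n) (Fin n) ℂ) :
    ((U : Matrix (Fin n) (Fin n) ℂ) * X * star (U : Matrix (Fin n) (Fin n) ℂ)).trace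
      = X.trace := by
  rw [Matrix.trace_mul_cycle]
  rw [show star (U : Matrix (Fin n) (Fin n) ℂ) * (U : Matrix (Fin n) (Fin n) ℂ) = 1 from
    Matrix.UnitaryGroup.star_mul_self U]
  rw [Matrix.one_mul]

open scoped MatrixOrder in
lemma traceNorm_hermitian {n : ℕ} {A : Matrix (Fin n) (Fin n) ℂ} (hA : A.IsHermitian) :
    traceNorm A = ∑ i, |hA.eigenvalues i| := by
  have hAA : A.conjTranspose * A =
      (hA.eigenvectorUnitary : Matrix (Fin n) (Fin n) ℂ)
        * Matrix.diagonal (fun i => ((hA.eigenvalues i : ℝ) : ℂ)^2)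
        * star (hA.eigenvectorUnitary : Matrix (Fin n) (Fin n) ℂ) := by
    conv_lhs => rw [hA.eq, hA.spectral_theorem, Unitary.conjStarAlgAut_apply]
    rw [show (Matrix.diagonal (fun i => ((hA.eigenvalues i : ℝ) : ℂ)^2)) =
      Matrix.diagonal (RCLike.ofReal ∘ hA.eigenvalues) *
      Matrix.diagonal (RCLike.ofReal ∘ hA.eigenvalues) by
        rw [Matrix.diagonal_mul_diagonal]; congr 1; funext i; simp [sq]]
    have hU : star (hA.eigenvectorUnitary : Matrix (Fin n) (Fin n) ℂ)
        * (hA.eigenvectorUnitary : Matrix (Fin n) (Fin n) ℂ) = 1 :=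
      Matrix.UnitaryGroup.star_mul_self _
    -- (U D U*) (U D U*) = U D D U*
    simp only [Matrix.mul_assoc]
    congr 1
    rw [← Matrix.mul_assoc (star _), hU, Matrix.one_mul, ← Matrix.mul_assoc]
  set S : Matrix (Fin n) (Fin n) ℂ :=
    (hA.eigenvectorUnitary : Matrix (Fin n) (Fin n) ℂ)
      * Matrix.diagonal (fun i => ((|hA.eigenvalues i| : ℝ) : ℂ))
      * star (hA.eigenvectorUnitary : Matrix (Fin n) (Fin n) ℂ) with hS
  have hSpsd : S.PosSemidef := by
    rw [hS]
    exact (Matrix.PosSemidef.diagonal (by intro i; positivity)).mul_mul_conjTranspose_same _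
  have hSsq : S ^ 2 = A.conjTranspose * A := by
    rw [hAA, hS, sq]
    have hU : star (hA.eigenvectorUnitary : Matrix (Fin n) (Fin n) ℂ)
        * (hA.eigenvectorUnitary : Matrix (Fin n) (Fin n) ℂ) = 1 :=
      Matrix.UnitaryGroup.star_mul_self _
    simp only [Matrix.mul_assoc]
    congr 1
    rw [← Matrix.mul_assoc (star _), hU, Matrix.one_mul, ← Matrix.mul_assoc,
      Matrix.diagonal_mul_diagonal]
    congr 1
    exact congrArg Matrix.diagonal (funext fun i => by
      rw [← Complex.ofReal_mul, abs_mul_abs_self, ← Complex.ofReal_pow, sq])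
  have : S = ((Matrix.posSemidef_conjTranspose_mul_self A).1.eigenvectorUnitary : Matrix (Fin n) (Fin n) ℂ) *
      Matrix.diagonal (((↑) : ℝ → ℂ) ∘ (Real.sqrt ·) ∘ (Matrix.posSemidef_conjTranspose_mul_self A).1.eigenvalues) *
      (star (Matrix.posSemidef_conjTranspose_mul_self A).1.eigenvectorUnitary : Matrix (Fin n) (Fin n) ℂ) := by
    have h := (CFC.sqrt_eq_iff (Aᴴ * A) S (Matrix.posSemidef_conjTranspose_mul_self A).nonneg
      hSpsd.nonneg).2 (by rw [← sq]; exact hSsq)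
    rw [CFC.sqrt_eq_cfc, cfc_nnreal_eq_real _ _ (Matrix.posSemidef_conjTranspose_mul_self A).nonneg,
      (Matrix.posSemidef_conjTranspose_mul_self A).1.cfc_eq] at h
    rw [← h, IsHermitian.cfc, Unitary.conjStarAlgAut_apply]
    congr 3
    funext x
    simp [Real.coe_sqrt, Real.coe_toNNReal']
    rw [max_eq_left ((Matrix.posSemidef_conjTranspose_mul_self A).eigenvalues_nonneg x)]
  rw [traceNorm, ← this, hS, trace_unitary_conj, Matrix.trace_diagonal]
  push_cast
  simp

open Matrix

lemma sum_max_eq {ι : Type*} [Fintype ι] {l : ι → ℝ} (h : ∑ i, l i = 0) :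
    ∑ i, max (l i) 0 = (1/2) * ∑ i, |l i| := by
  have key : ∀ x : ℝ, max x 0 = (|x| + x)/2 := by
    intro x
    rcases le_total 0 x with hx | hx
    · rw [max_eq_left hx, abs_of_nonneg hx]; ring
    · rw [max_eq_right hx, abs_of_nonpos hx]; ring
  simp only [key]
  rw [← Finset.sum_div, Finset.sum_add_distrib, h, add_zero]
  ring

lemma conj_diag_entry {n : ℕ} (T : Matrix (Fin n) (Fin n) ℂ)
    (U : Matrix (Fin n) (Fin n) ℂ) (i : Fin n) :
    (star U * T * U) i i
      = dotProduct (star (fun a => U a i)) (T *ᵥ (fun a => U a i)) := by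
  simp only [Matrix.mul_apply, dotProduct, Matrix.mulVec, Matrix.star_apply,
    Pi.star_apply, RCLike.star_def, Finset.sum_mul, Finset.mul_sum]
  rw [Finset.sum_comm]
  refine Finset.sum_congr rfl fun a _ => Finset.sum_congr rfl fun b _ => ?_
  ring

lemma povm_conj_diag {n : ℕ} {T : Matrix (Fin n) (Fin n) ℂ} (hT : IsPOVMElement T)
    (U : Matrix.unitaryGroup (Fin n) ℂ) (i : Fin n) :
    0 ≤ ((star (U : Matrix (Fin n) (Fin n) ℂ) * T * (U : Matrix (Fin n) (Fin n) ℂ)) i i).re ∧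
      ((star (U : Matrix (Fin n) (Fin n) ℂ) * T * (U : Matrix (Fin n) (Fin n) ℂ)) i i).re ≤ 1 := by
  set x : Fin n → ℂ := fun a => (U : Matrix (Fin n) (Fin n) ℂ) a i with hx
  have h1 : (star (U : Matrix (Fin n) (Fin n) ℂ) * T * (U : Matrix (Fin n) (Fin n) ℂ)) i i
      = dotProduct (star x) (T *ᵥ x) := conj_diag_entry T _ i
  have hxx : dotProduct (star x) x = 1 := by
    have h2 := conj_diag_entry (1 : Matrix (Fin n) (Fin n) ℂ)
      (U : Matrix (Fin n) (Fin n) ℂ) i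
    rw [Matrix.mul_one, Matrix.UnitaryGroup.star_mul_self] at h2
    rw [Matrix.one_mulVec] at h2
    rw [← h2, Matrix.one_apply_eq]
  constructor
  · rw [h1]
    simpa only [RCLike.re_to_complex] using hT.1.re_dotProduct_nonneg x
  · have := hT.2.re_dotProduct_nonneg x
    rw [Matrix.sub_mulVec, dotProduct_sub, Matrix.one_mulVec, hxx] at this
    rw [h1]
    simp only [map_sub, _root_.map_one, RCLike.re_to_complex, Complex.one_re] at this
    linarith

section spectral
variable {n : ℕ} {Δ : Matrix (Fin n) (Fin n) ℂ}

lemma eigen_sum_zero (hΔ : Δ.IsHermitian) (htr : Δ.trace = 0) :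
    ∑ i, hΔ.eigenvalues i = 0 := by
  have h1 : Δ.trace = ∑ i, ((hΔ.eigenvalues i : ℝ) : ℂ) := by
    conv_lhs => rw [hΔ.spectral_theorem, Unitary.conjStarAlgAut_apply]
    rw [trace_unitary_conj, Matrix.trace_diagonal]
    rfl
  rw [h1] at htr
  have := congrArg Complex.re htr
  simpa using this

lemma conj_M_trace (hΔ : Δ.IsHermitian) (T : Matrix (Fin n) (Fin n) ℂ) :
    (T * Δ).trace = ∑ i, ((star (hΔ.eigenvectorUnitary : Matrix (Fin n) (Fin n) ℂ) * T *
        (hΔ.eigenvectorUnitary : Matrix (Fin n) (Fin n) ℂ)) i i) * ((hΔ.eigenvalues i : ℝ) : ℂ) := by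
  set Uu := hΔ.eigenvectorUnitary with hUu
  set U : Matrix (Fin n) (Fin n) ℂ := (Uu : Matrix (Fin n) (Fin n) ℂ) with hU
  set D : Matrix (Fin n) (Fin n) ℂ :=
    Matrix.diagonal (RCLike.ofReal ∘ hΔ.eigenvalues) with hD
  have h1 : U * star U = 1 := Unitary.coe_mul_star_self Uu
  have key : T * Δ = U * ((star U * T * U) * D) * star U := by
    conv_lhs => rw [hΔ.spectral_theorem, Unitary.conjStarAlgAut_apply]
    rw [show U * ((star U * T * U) * D) * star U
        = (U * star U) * (T * (U * D * star U)) from by simp only [Matrix.mul_assoc], h1,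
      Matrix.one_mul]
  rw [key, trace_unitary_conj]
  rw [Matrix.trace]
  simp [Matrix.diag, Matrix.mul_diagonal, hD]

lemma re_trace_povm_le (hΔ : Δ.IsHermitian) (htr : Δ.trace = 0)
    {T : Matrix (Fin n) (Fin n) ℂ} (hT : IsPOVMElement T) :
    ((T * Δ).trace).re ≤ (1/2) * traceNorm Δ := by
  rw [conj_M_trace hΔ T, traceNorm_hermitian hΔ, ← sum_max_eq (eigen_sum_zero hΔ htr)]
  rw [Complex.re_sum]
  refine Finset.sum_le_sum fun i _ => ?_
  obtain ⟨hc0, hc1⟩ := povm_conj_diag hT hΔ.eigenvectorUnitary i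
  rw [Complex.mul_re, Complex.ofReal_re, Complex.ofReal_im, mul_zero, sub_zero]
  rcases le_total 0 (hΔ.eigenvalues i) with hl | hl
  · rw [max_eq_left hl]; nlinarith
  · rw [max_eq_right hl]; nlinarith

lemma exists_povm_re_trace_eq (hΔ : Δ.IsHermitian) (htr : Δ.trace = 0) :
    ∃ T : Matrix (Fin n) (Fin n) ℂ, IsPOVMElement T ∧
      ((T * Δ).trace).re = (1/2) * traceNorm Δ := by
  set Uu := hΔ.eigenvectorUnitary with hUu
  set U : Matrix (Fin n) (Fin n) ℂ := (Uu : Matrix (Fin n) (Fin n) ℂ) with hU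
  set d : Fin n → ℂ := fun i => if 0 ≤ hΔ.eigenvalues i then 1 else 0 with hd
  refine ⟨U * Matrix.diagonal d * star U, ⟨?_, ?_⟩, ?_⟩
  · have : (Matrix.diagonal d).PosSemidef := by
      refine Matrix.PosSemidef.diagonal fun i => ?_
      rw [hd]; dsimp only; split <;> simp
    simpa [Matrix.star_eq_conjTranspose] using this.mul_mul_conjTranspose_same U
  · have h1 : U * star U = 1 := Unitary.coe_mul_star_self Uu
    have key : 1 - U * Matrix.diagonal d * star U
        = U * Matrix.diagonal (fun i => 1 - d i) * star U := by
      have : Matrix.diagonal (fun i => 1 - d i) = 1 - Matrix.diagonal d := by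
        rw [← Matrix.diagonal_one, Matrix.diagonal_sub]
      rw [this, Matrix.mul_sub, Matrix.mul_one, Matrix.sub_mul, h1]
    rw [key]
    have : (Matrix.diagonal (fun i => 1 - d i)).PosSemidef := by
      refine Matrix.PosSemidef.diagonal fun i => ?_
      rw [hd]; dsimp only; split <;> simp
    simpa [Matrix.star_eq_conjTranspose] using this.mul_mul_conjTranspose_same U
  · rw [conj_M_trace hΔ, traceNorm_hermitian hΔ, ← sum_max_eq (eigen_sum_zero hΔ htr)]
    have hMd : ∀ i : Fin n, (star U * (U * Matrix.diagonal d * star U) * U) i i = d i := by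
      intro i
      have h2 : star U * U = 1 := Matrix.UnitaryGroup.star_mul_self Uu
      have : star U * (U * Matrix.diagonal d * star U) * U = Matrix.diagonal d := by
        rw [show star U * (U * Matrix.diagonal d * star U) * U
          = (star U * U) * Matrix.diagonal d * (star U * U) from by simp only [Matrix.mul_assoc],
          h2, Matrix.one_mul, Matrix.mul_one]
      rw [this, Matrix.diagonal_apply_eq]
    rw [Complex.re_sum]
    refine Finset.sum_congr rfl fun i _ => ?_
    rw [hMd i, hd]
    dsimp only
    rcases le_total 0 (hΔ.eigenvalues i) with hl | hl
    · rw [max_eq_left hl, if_pos hl]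
      simp
    · rcases eq_or_lt_of_le hl with he | hlt
      · rw [← he]; simp
      · rw [max_eq_right hl, if_neg (not_le.mpr hlt)]
        simp

end spectral
section compact
variable {n : ℕ}

lemma quad_single {T : Matrix (Fin n) (Fin n) ℂ} (k : Fin n) :
    dotProduct (star (Pi.single k (1:ℂ))) (T *ᵥ Pi.single k (1:ℂ)) = T k k := by
  rw [← Pi.single_star, star_one, single_dotProduct, Matrix.mulVec_single]
  simp

lemma povm_diag_bounds {T : Matrix (Fin n) (Fin n) ℂ} (hT : IsPOVMElement T) (k : Fin n) :
    0 ≤ (T k k).re ∧ (T k k).re ≤ 1 ∧ (T k k).im = 0 := by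
  have h1 := hT.1.dotProduct_mulVec_nonneg (Pi.single k 1)
  rw [quad_single] at h1
  have h2 := hT.2.dotProduct_mulVec_nonneg (Pi.single k 1)
  rw [quad_single] at h2
  rw [Complex.le_def] at h1 h2
  simp only [Complex.zero_re, Complex.zero_im, Matrix.sub_apply, Matrix.one_apply_eq,
    Complex.sub_re, Complex.one_re, Complex.sub_im, Complex.one_im] at h1 h2
  refine ⟨h1.1, by linarith [h2.1], h1.2.symm⟩

lemma quad_two {T : Matrix (Fin n) (Fin n) ℂ} {i j : Fin n} (hij : i ≠ j) (a b : ℂ) :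
    dotProduct (star (Pi.single i a + Pi.single j b))
        (T *ᵥ (Pi.single i a + Pi.single j b))
      = star a * T i i * a + star a * T i j * b + star b * T j i * a + star b * T j j * b := by
  rw [star_add, ← Pi.single_star, ← Pi.single_star, Matrix.mulVec_add,
    add_dotProduct, dotProduct_add, dotProduct_add,
    single_dotProduct, single_dotProduct, single_dotProduct,
    single_dotProduct, Matrix.mulVec_single, Matrix.mulVec_single]
  simp only [Pi.smul_apply, op_smul_eq_mul, Matrix.col_apply]
  ring

lemma povm_entry_bound {T : Matrix (Fin n) (Fin n) ℂ} (hT : IsPOVMElement T) (i j : Fin n) :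
    ‖T i j‖ ≤ 1 := by
  rcases eq_or_ne i j with rfl | hij
  · obtain ⟨h0, h1, him⟩ := povm_diag_bounds hT i
    have : T i i = ((T i i).re : ℂ) := Complex.ext rfl (by simp [him])
    rw [this, Complex.norm_real, Real.norm_eq_abs, abs_of_nonneg h0]
    exact h1
  · have h := hT.1.dotProduct_mulVec_nonneg (Pi.single i (-T i j) + Pi.single j 1)
    rw [quad_two hij] at h
    have hji : T j i = star (T i j) := by
      have := congrFun (congrFun hT.1.1 j) i
      simpa [Matrix.conjTranspose_apply] using this.symm
    rw [Complex.le_def] at h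
    obtain ⟨hre, -⟩ := h
    obtain ⟨hii0, hii1, hiim⟩ := povm_diag_bounds hT i
    obtain ⟨hjj0, hjj1, hjjm⟩ := povm_diag_bounds hT j
    -- rewrite the quadratic form
    set z := T i j with hz
    have hq : (star (-z) * T i i * (-z) + star (-z) * z * 1
        + star (1:ℂ) * T j i * (-z) + star (1:ℂ) * T j j * 1).re
        = Complex.normSq z * (T i i).re - 2 * Complex.normSq z + (T j j).re := by
      rw [hji]
      simp [Complex.mul_re, Complex.normSq_apply, hiim, hjjm]
      ring
    rw [hq] at hre
    simp only [Complex.zero_re] at hre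
    have hnz : Complex.normSq z ≤ 1 := by nlinarith [Complex.normSq_nonneg z]
    have := Complex.sq_norm z
    nlinarith [norm_nonneg z]

lemma isClosed_psd : IsClosed {A : Matrix (Fin n) (Fin n) ℂ | A.PosSemidef} := by
  have : {A : Matrix (Fin n) (Fin n) ℂ | A.PosSemidef}
      = {A : Matrix (Fin n) (Fin n) ℂ | Aᴴ = A}
        ∩ ⋂ x : Fin n → ℂ, {A | 0 ≤ dotProduct (star x) (A *ᵥ x)} := by
    ext A
    simp only [Set.mem_setOf_eq, Set.mem_inter_iff, Set.mem_iInter]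
    exact ⟨fun h => ⟨h.1, h.dotProduct_mulVec_nonneg⟩, fun h => Matrix.PosSemidef.of_dotProduct_mulVec_nonneg h.1 h.2⟩
  rw [this]
  refine IsClosed.inter (isClosed_eq (continuous_id.matrix_conjTranspose) continuous_id) ?_
  refine isClosed_iInter fun x => ?_
  have hcont : Continuous fun A : Matrix (Fin n) (Fin n) ℂ =>
      dotProduct (star x) (A *ᵥ x) :=
    (continuous_const).dotProduct (continuous_id.matrix_mulVec continuous_const)
  have hcl : IsClosed {z : ℂ | 0 ≤ z} := by
    have : {z : ℂ | 0 ≤ z} = Complex.re ⁻¹' Set.Ici 0 ∩ Complex.im ⁻¹' {0} := by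
      ext z
      simp only [Set.mem_setOf_eq, Complex.le_def, Set.mem_inter_iff, Set.mem_preimage,
        Set.mem_Ici, Set.mem_singleton_iff, Complex.zero_re, Complex.zero_im]
      exact ⟨fun h => ⟨h.1, h.2.symm⟩, fun h => ⟨h.1, h.2.symm⟩⟩
    rw [this]
    exact (isClosed_Ici.preimage Complex.continuous_re).inter
      (isClosed_singleton.preimage Complex.continuous_im)
  exact hcl.preimage hcont

lemma isCompact_povm : IsCompact {T : Matrix (Fin n) (Fin n) ℂ | IsPOVMElement T} := by
  have hclosed : IsClosed {T : Matrix (Fin n) (Fin n) ℂ | IsPOVMElement T} := by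
    have : {T : Matrix (Fin n) (Fin n) ℂ | IsPOVMElement T}
        = {T | Matrix.PosSemidef T}
          ∩ (fun T : Matrix (Fin n) (Fin n) ℂ => 1 - T) ⁻¹' {A | Matrix.PosSemidef A} := by
      rfl
    rw [this]
    exact isClosed_psd.inter (isClosed_psd.preimage (continuous_const.sub continuous_id))
  have hbox : IsCompact {T : Matrix (Fin n) (Fin n) ℂ |
      ∀ i j, T i j ∈ Metric.closedBall (0:ℂ) 1} := by
    have : {T : Matrix (Fin n) (Fin n) ℂ | ∀ i j, T i j ∈ Metric.closedBall (0:ℂ) 1}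
        = Set.univ.pi fun _ : Fin n => Set.univ.pi fun _ : Fin n =>
            Metric.closedBall (0:ℂ) 1 := by
      ext T
      constructor
      · intro h
        exact Set.mem_univ_pi.mpr fun i => Set.mem_univ_pi.mpr fun j => by
          simpa [Complex.dist_eq] using h i j
      · intro h i j
        have := Set.mem_univ_pi.mp (Set.mem_univ_pi.mp h i) j
        simpa [Complex.dist_eq] using this
    rw [this]
    exact isCompact_univ_pi fun _ => isCompact_univ_pi fun _ =>
      ProperSpace.isCompact_closedBall _ _
  refine IsCompact.of_isClosed_subset hbox hclosed ?_
  intro T hT i j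
  simpa [Complex.dist_eq] using povm_entry_bound hT i j

end compact

section support
variable {n : ℕ}

lemma psd_real_smul {a : ℝ} (ha : 0 ≤ a) {A : Matrix (Fin n) (Fin n) ℂ}
    (hA : A.PosSemidef) : (a • A).PosSemidef := by
  rw [Matrix.posSemidef_iff_dotProduct_mulVec]
  constructor
  · have := hA.1
    unfold Matrix.IsHermitian at this ⊢
    rw [Matrix.conjTranspose_smul, this, star_trivial]
  · intro x
    rw [Matrix.smul_mulVec, dotProduct_smul]
    have h1 := hA.dotProduct_mulVec_nonneg x
    have h2 : a • dotProduct (star x) (A *ᵥ x) = (a : ℂ) * dotProduct (star x) (A *ᵥ x) := by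
      simp [Complex.real_smul]
    rw [h2]
    exact mul_nonneg (by exact_mod_cast Complex.zero_le_real.mpr ha) h1

lemma povm_convex {T₁ T₂ : Matrix (Fin n) (Fin n) ℂ} (h₁ : IsPOVMElement T₁)
    (h₂ : IsPOVMElement T₂) {a b : ℝ} (ha : 0 ≤ a) (hb : 0 ≤ b) (hab : a + b = 1) :
    IsPOVMElement (a • T₁ + b • T₂) := by
  constructor
  · exact (psd_real_smul ha h₁.1).add (psd_real_smul hb h₂.1)
  · have key : 1 - (a • T₁ + b • T₂) = a • (1 - T₁) + b • (1 - T₂) := by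
      rw [smul_sub, smul_sub]
      have h1 : (1 : Matrix (Fin n) (Fin n) ℂ) = a • 1 + b • 1 := by
        rw [← add_smul, hab, one_smul]
      nth_rewrite 1 [h1]
      abel
    rw [key]
    exact (psd_real_smul ha h₁.2).add (psd_real_smul hb h₂.2)

lemma povm_zero : IsPOVMElement (0 : Matrix (Fin n) (Fin n) ℂ) :=
  ⟨Matrix.PosSemidef.zero, by simpa using Matrix.PosSemidef.one⟩

end support

section algebra
variable {n : ℕ} {ι₀ ι₁ : Type} [Fintype ι₀] [Fintype ι₁]
variable (ρ : ι₀ → Matrix (Fin n) (Fin n) ℂ) (σ : ι₁ → Matrix (Fin n) (Fin n) ℂ)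

lemma sum_mu_f (T : Matrix (Fin n) (Fin n) ℂ) (μ : ι₀ × ι₁ → ℝ) :
    ∑ p : ι₀ × ι₁, μ p * (((T * ρ p.1).trace).re - ((T * σ p.2).trace).re)
      = ((T * (∑ i, ((∑ j, μ (i, j) : ℝ) : ℂ) • ρ i
          - ∑ j, ((∑ i, μ (i, j) : ℝ) : ℂ) • σ j)).trace).re := by
  rw [Matrix.mul_sub, Finset.mul_sum, Finset.mul_sum]
  simp only [Matrix.mul_smul, Matrix.trace_sub, Matrix.trace_sum, Matrix.trace_smul,
    smul_eq_mul, Complex.sub_re, Complex.re_sum, Complex.re_ofReal_mul]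
  rw [Fintype.sum_prod_type]
  simp only [mul_sub, Finset.sum_sub_distrib]
  congr 1
  · refine Finset.sum_congr rfl fun i _ => ?_
    rw [Finset.sum_mul]
  · rw [Finset.sum_comm]
    refine Finset.sum_congr rfl fun j _ => ?_
    rw [Finset.sum_mul]

lemma delta_herm (hρ : ∀ i, IsDensityMatrix (ρ i)) (hσ : ∀ j, IsDensityMatrix (σ j))
    (μ : ι₀ × ι₁ → ℝ) :
    (∑ i, ((∑ j, μ (i, j) : ℝ) : ℂ) • ρ i
      - ∑ j, ((∑ i, μ (i, j) : ℝ) : ℂ) • σ j).IsHermitian := by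
  unfold Matrix.IsHermitian
  rw [Matrix.conjTranspose_sub, Matrix.conjTranspose_sum, Matrix.conjTranspose_sum]
  congr 1
  · refine Finset.sum_congr rfl fun i _ => ?_
    rw [Matrix.conjTranspose_smul, (hρ i).1.1, RCLike.star_def, Complex.conj_ofReal]
  · refine Finset.sum_congr rfl fun j _ => ?_
    rw [Matrix.conjTranspose_smul, (hσ j).1.1, RCLike.star_def, Complex.conj_ofReal]

lemma delta_trace0 (hρ : ∀ i, IsDensityMatrix (ρ i)) (hσ : ∀ j, IsDensityMatrix (σ j))
    (μ : ι₀ × ι₁ → ℝ) (hsum : (∑ p, μ p) = 1) :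
    (∑ i, ((∑ j, μ (i, j) : ℝ) : ℂ) • ρ i
      - ∑ j, ((∑ i, μ (i, j) : ℝ) : ℂ) • σ j).trace = 0 := by
  rw [Matrix.trace_sub, Matrix.trace_sum, Matrix.trace_sum]
  simp only [Matrix.trace_smul, smul_eq_mul]
  have h1 : ∀ i, (ρ i).trace = 1 := fun i => (hρ i).2
  have h2 : ∀ j, (σ j).trace = 1 := fun j => (hσ j).2
  simp only [h1, h2, mul_one]
  rw [sub_eq_zero]
  have hs : ∑ i, ∑ j, μ (i, j) = ∑ j, ∑ i, μ (i, j) := Finset.sum_comm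
  rw [← Complex.ofReal_sum, ← Complex.ofReal_sum, hs]

lemma f_affine (T₁ T₂ : Matrix (Fin n) (Fin n) ℂ) (a b : ℝ) (p : ι₀ × ι₁) :
    (((a • T₁ + b • T₂) * ρ p.1).trace).re - (((a • T₁ + b • T₂) * σ p.2).trace).re
      = a * (((T₁ * ρ p.1).trace).re - ((T₁ * σ p.2).trace).re)
        + b * (((T₂ * ρ p.1).trace).re - ((T₂ * σ p.2).trace).re) := by
  have key : ∀ X : Matrix (Fin n) (Fin n) ℂ,
      (((a • T₁ + b • T₂) * X).trace).re = a * ((T₁ * X).trace).re + b * ((T₂ * X).trace).re := by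
    intro X
    rw [Matrix.add_mul, Matrix.smul_mul, Matrix.smul_mul, Matrix.trace_add,
      Matrix.trace_smul, Matrix.trace_smul]
    simp [Complex.smul_re]
  rw [key, key]
  ring

end algebra

/-- `max_T min_{(ρ,σ) ∈ S₀ × S₁} (Tr(Tρ) - Tr(Tσ))` over POVM elements `T` equals
`min_μ (1/2)‖ρ_{μ₀} - σ_{μ₁}‖₁` over probability distributions `μ` on `S₀ × S₁`,
where `μ₀, μ₁` are the marginals of `μ`. -/
theorem maxPovmMinPair_eq_minDistHalfTraceNorm
    {n : ℕ} {ι₀ ι₁ : Type} [Fintype ι₀] [Fintype ι₁] [Nonempty ι₀] [Nonempty ι₁]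
    (ρ : ι₀ → Matrix (Fin n) (Fin n) ℂ) (σ : ι₁ → Matrix (Fin n) (Fin n) ℂ)
    (hρ : ∀ i, IsDensityMatrix (ρ i)) (hσ : ∀ j, IsDensityMatrix (σ j)) :
    ∃ v : ℝ,
      IsGreatest
        {x : ℝ | ∃ T : Matrix (Fin n) (Fin n) ℂ, IsPOVMElement T ∧
          x = Finset.univ.inf' Finset.univ_nonempty
            (fun p : ι₀ × ι₁ => ((T * ρ p.1).trace).re - ((T * σ p.2).trace).re)} v ∧
      IsLeast
        {x : ℝ | ∃ μ : ι₀ × ι₁ → ℝ, (∀ p, 0 ≤ μ p) ∧ (∑ p, μ p) = 1 ∧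
          x = (1 / 2) * traceNorm
            (∑ i, ((∑ j, μ (i, j) : ℝ) : ℂ) • ρ i
              - ∑ j, ((∑ i, μ (i, j) : ℝ) : ℂ) • σ j)} v := by
  classical
  set f : Matrix (Fin n) (Fin n) ℂ → ι₀ × ι₁ → ℝ :=
    fun T p => ((T * ρ p.1).trace).re - ((T * σ p.2).trace).re with hf
  set g : Matrix (Fin n) (Fin n) ℂ → ℝ :=
    fun T => Finset.univ.inf' Finset.univ_nonempty (f T) with hg
  set Dl : (ι₀ × ι₁ → ℝ) → Matrix (Fin n) (Fin n) ℂ := fun μ =>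
    ∑ i, ((∑ j, μ (i, j) : ℝ) : ℂ) • ρ i - ∑ j, ((∑ i, μ (i, j) : ℝ) : ℂ) • σ j with hDl
  -- continuity of g
  have hfc : ∀ p, Continuous fun T : Matrix (Fin n) (Fin n) ℂ => f T p := by
    intro p
    apply Continuous.sub
    · exact Complex.continuous_re.comp ((continuous_id.matrix_mul continuous_const).matrix_trace)
    · exact Complex.continuous_re.comp ((continuous_id.matrix_mul continuous_const).matrix_trace)
  have hgc : Continuous g := by
    rw [hg]
    exact continuous_iff_continuousAt.2 fun T =>
      ContinuousAt.finset_inf'_apply Finset.univ_nonempty fun p _ => (hfc p).continuousAt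
  obtain ⟨Tm, hTmmem, hTmmax⟩ :=
    isCompact_povm.exists_isMaxOn ⟨0, povm_zero⟩ hgc.continuousOn
  set V := g Tm with hV
  -- weak duality
  have hweak : ∀ μ : ι₀ × ι₁ → ℝ, (∀ p, 0 ≤ μ p) → (∑ p, μ p) = 1 →
      V ≤ (1/2) * traceNorm (Dl μ) := by
    intro μ hpos hsum
    have h1 : V ≤ ∑ p, μ p * f Tm p := by
      calc V = ∑ p, μ p * V := by rw [← Finset.sum_mul, hsum, one_mul]
      _ ≤ ∑ p, μ p * f Tm p :=
        Finset.sum_le_sum fun p _ => mul_le_mul_of_nonneg_left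
          (Finset.inf'_le _ (Finset.mem_univ p)) (hpos p)
    have h2 : ∑ p, μ p * f Tm p = ((Tm * Dl μ).trace).re := sum_mu_f ρ σ Tm μ
    have h3 := re_trace_povm_le (delta_herm ρ σ hρ hσ μ) (delta_trace0 ρ σ hρ hσ μ hsum)
      hTmmem
    rw [h2] at h1
    exact h1.trans h3
  -- separation
  set K : Set (ι₀ × ι₁ → ℝ) := (fun T => f T) '' {T | IsPOVMElement T} with hK
  set O : Set (ι₀ × ι₁ → ℝ) := {x | ∀ p, V < x p} with hO
  have hOopen : IsOpen O := by
    have : O = ⋂ p, (fun x : ι₀ × ι₁ → ℝ => x p) ⁻¹' Set.Ioi V := by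
      ext x; simp [hO]
    rw [this]
    exact isOpen_iInter_of_finite fun p => isOpen_Ioi.preimage (continuous_apply p)
  have hOconv : Convex ℝ O := by
    intro x hx y hy a b ha hb hab
    intro p
    have hxy : (a • x + b • y) p = a * x p + b * y p := by simp
    rw [hxy]
    rcases ha.lt_or_eq with ha' | ha'
    · have h1 : a * V < a * x p := (mul_lt_mul_iff_right₀ ha').2 (hx p)
      have h2 : b * V ≤ b * y p := mul_le_mul_of_nonneg_left (le_of_lt (hy p)) hb
      have h3 : a * V + b * V = V := by rw [← add_mul, hab, one_mul]
      linarith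
    · have hb1 : b = 1 := by linarith
      have := hy p
      rw [← ha', hb1]
      simpa using this
  have hKconv : Convex ℝ K := by
    rintro x ⟨T₁, hT₁, rfl⟩ y ⟨T₂, hT₂, rfl⟩ a b ha hb hab
    refine ⟨a • T₁ + b • T₂, povm_convex hT₁ hT₂ ha hb hab, ?_⟩
    funext p
    simp only [Pi.add_apply, Pi.smul_apply, smul_eq_mul, hf]
    exact f_affine ρ σ T₁ T₂ a b p
  have hdisj : Disjoint O K := by
    rw [Set.disjoint_left]
    rintro x hxO ⟨T, hT, rfl⟩
    have h1 : g T ≤ V := hTmmax hT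
    have h2 : V < g T := by
      rw [hg]
      exact (Finset.lt_inf'_iff _).2 fun p _ => hxO p
    exact absurd h1 (not_le.2 h2)
  obtain ⟨φ, u, hOlt, hKge⟩ := geometric_hahn_banach_open hOconv hOopen hKconv hdisj
  set w : ι₀ × ι₁ → ℝ := fun p => φ (Pi.single p 1) with hw
  have hrep : ∀ x : ι₀ × ι₁ → ℝ, φ x = ∑ p, x p * w p := by
    intro x
    have hx : x = ∑ p, x p • (Pi.single p 1 : ι₀ × ι₁ → ℝ) := by
      funext q
      rw [Finset.sum_apply]
      simp [Pi.single_apply, eq_comm]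
    conv_lhs => rw [hx]
    rw [map_sum]
    refine Finset.sum_congr rfl fun p _ => ?_
    rw [_root_.map_smul, hw, smul_eq_mul]
  have hwle : ∀ p, w p ≤ 0 := by
    intro p
    by_contra hcon
    push_neg at hcon
    set C : ℝ := ∑ q, (V + 1) * w q with hC
    set M : ℝ := max 0 ((u - C)/(w p) + 1) with hM
    set x : ι₀ × ι₁ → ℝ := fun q => (V + 1) + (if q = p then M else 0) with hx
    have hxO : x ∈ O := by
      intro q
      rw [hx]
      dsimp only
      have h0 : (0:ℝ) ≤ if q = p then M else 0 := by
        split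
        · exact le_max_left _ _
        · exact le_refl _
      linarith
    have hφx : φ x = C + M * w p := by
      rw [hrep]
      have hsplit : ∀ q, x q * w q = (V+1) * w q + (if q = p then M else 0) * w q := by
        intro q
        rw [hx]
        dsimp only
        ring
      rw [Finset.sum_congr rfl fun q _ => hsplit q, Finset.sum_add_distrib]
      congr 1
      simp [ite_mul]
    have h1 := hOlt x hxO
    rw [hφx] at h1
    have h2 : (u - C)/(w p) + 1 ≤ M := le_max_right _ _
    have h3 : ((u - C)/(w p) + 1) * w p ≤ M * w p :=
      mul_le_mul_of_nonneg_right h2 (le_of_lt hcon)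
    have h4 : ((u - C)/(w p) + 1) * w p = (u - C) + w p := by
      field_simp
    linarith
  set ν : ι₀ × ι₁ → ℝ := fun p => -w p with hν
  have hνnn : ∀ p, 0 ≤ ν p := fun p => neg_nonneg.2 (hwle p)
  set S := ∑ p, ν p with hS
  have hSnn : 0 ≤ S := Finset.sum_nonneg fun p _ => hνnn p
  have hwsum : ∑ p, w p = -S := by
    rw [hS, hν]
    simp
  have hSpos : 0 < S := by
    rcases hSnn.lt_or_eq with h | h
    · exact h
    exfalso
    have hw0 : ∀ p, w p = 0 := by
      intro p
      have h0 := (Finset.sum_eq_zero_iff_of_nonneg (fun p _ => hνnn p)).1 h.symm p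
        (Finset.mem_univ p)
      have : ν p = 0 := h0
      rw [hν] at this
      simpa [neg_eq_zero] using this
    have hφ0 : ∀ x, φ x = 0 := fun x => by rw [hrep]; simp [hw0]
    have hKne : f (0 : Matrix (Fin n) (Fin n) ℂ) ∈ K := ⟨0, povm_zero, rfl⟩
    have h1 : u ≤ 0 := by simpa [hφ0] using hKge _ hKne
    have h2 : (fun _ : ι₀ × ι₁ => V + 1) ∈ O := fun p => by norm_num
    have h3 : (0:ℝ) < u := by
      have := hOlt _ h2
      rw [hφ0] at this
      linarith
    linarith
  have hukey : -u ≤ V * S := by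
    by_contra hcon
    push_neg at hcon
    set ε := (-u - V * S)/(2 * S) with hε
    have hεpos : 0 < ε := by
      apply div_pos <;> linarith
    have hmem : (fun _ : ι₀ × ι₁ => V + ε) ∈ O := fun p => by
      show V < V + ε
      linarith
    have h1 := hOlt _ hmem
    have h2 : φ (fun _ => V + ε) = -((V + ε) * S) := by
      rw [hrep, ← Finset.mul_sum, hwsum]
      ring
    rw [h2] at h1
    have hεS : ε * S = (-u - V * S)/2 := by
      rw [hε]
      field_simp
    nlinarith
  set μs : ι₀ × ι₁ → ℝ := fun p => ν p / S with hμs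
  have hμsnn : ∀ p, 0 ≤ μs p := fun p => div_nonneg (hνnn p) (le_of_lt hSpos)
  have hμssum : ∑ p, μs p = 1 := by
    rw [hμs]
    rw [show (∑ p, ν p / S) = (∑ p, ν p) / S from (Finset.sum_div _ _ _).symm, ← hS,
      div_self (ne_of_gt hSpos)]
  have hμsbound : ∀ T, IsPOVMElement T → ∑ p, μs p * f T p ≤ V := by
    intro T hT
    have h1 : u ≤ φ (f T) := hKge _ ⟨T, hT, rfl⟩
    have h2 : φ (f T) = ∑ p, f T p * w p := hrep _
    have h3 : ∑ p, f T p * w p = -∑ p, ν p * f T p := by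
      rw [← Finset.sum_neg_distrib]
      refine Finset.sum_congr rfl fun p _ => ?_
      rw [hν]
      ring
    have h4 : ∑ p, ν p * f T p ≤ V * S := by
      rw [h2, h3] at h1
      linarith
    have h5 : ∑ p, μs p * f T p = (∑ p, ν p * f T p)/S := by
      rw [Finset.sum_div]
      refine Finset.sum_congr rfl fun p _ => ?_
      rw [hμs]
      ring
    rw [h5, div_le_iff₀ hSpos]
    linarith [h4]
  obtain ⟨T₀, hT₀, hT₀eq⟩ := exists_povm_re_trace_eq (delta_herm ρ σ hρ hσ μs)
    (delta_trace0 ρ σ hρ hσ μs hμssum)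
  have hhalf_le : (1/2) * traceNorm (Dl μs) ≤ V := by
    have := hμsbound T₀ hT₀
    rw [sum_mu_f ρ σ T₀ μs] at this
    rw [← hT₀eq]
    exact this
  have hVeq : (1/2) * traceNorm (Dl μs) = V := le_antisymm hhalf_le (hweak μs hμsnn hμssum)
  refine ⟨V, ⟨⟨Tm, hTmmem, rfl⟩, ?_⟩, ⟨⟨μs, hμsnn, hμssum, hVeq.symm⟩, ?_⟩⟩
  · rintro x ⟨T, hT, rfl⟩
    exact hTmmax hT
  · rintro x ⟨μ, hpos, hsum, rfl⟩
    exact hweak μ hpos hsum
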